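/- arXiv:2310.01305 — 2 statements merged into one kernel-verified Lean document; each statement's English description precedes it below -/
import Mathlib

section
/- Let n = 2^k · p^2 be a 2-near perfect number (p an odd prime, k a positive integer) whose omitted divisors are d₁ = 1 and d₂ = 2^b · p^2 for some b with 1 ≤ b ≤ k. Then n = 36, with omitted divisors 1 and 18. -/
open ArithmeticFunction
open scoped ArithmeticFunction.sigma

/-!
Multiplicativity of `σ` turns the hypothesis into `2^(k+1) (p+1) = (2^b+1) p² + p + 2`. Hence
`p + 1` divides `2^b + 2`, say `(p+1) q = 2^b + 2`, and `p + q = 2^(k+1) - 2^b (p-1)` is a positive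
multiple of `2^(b+1)` because `p` is odd; as `p + 1 ≥ 4` it is at most `2^(b+1)`, so it equals
`2^(b+1)`. Substituting `q = 2^(b+1) - p` gives `2^b (2p+1) = p² + p + 2`, and since
`4 (p² + p + 2) = (2p+1)² + 7`, `2p + 1` divides `7`: so `p = 3`, `b = 1` and then `k = 2`.
-/

lemma sigma_one_two_pow_add_one (k : ℕ) : σ 1 (2 ^ k) + 1 = 2 ^ (k + 1) := by
  have hgeom := geom_sum_mul_add 1 (k + 1)
  norm_num at hgeom
  rwa [sigma_one_apply_prime_pow Nat.prime_two]

lemma sigma_one_two_pow_mul_add_sigma_one {m : ℕ} (hm : Odd m) (k : ℕ) :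
    σ 1 (2 ^ k * m) + σ 1 m = 2 ^ (k + 1) * σ 1 m := by
  rw [isMultiplicative_sigma.map_mul_of_coprime ((Nat.coprime_two_left.mpr hm).pow_left k),
    ← sigma_one_two_pow_add_one]
  ring

lemma sigma_one_prime_sq {p : ℕ} (hp : p.Prime) : σ 1 (p ^ 2) = 1 + p + p ^ 2 := by
  simp [sigma_one_apply_prime_pow hp, Finset.sum_range_succ]

lemma two_pow_succ_mul_succ_eq_of_sigma_one_eq {k p b : ℕ} (hp : p.Prime) (hodd : Odd p)
    (h : σ 1 (2 ^ k * p ^ 2) = 2 * (2 ^ k * p ^ 2) + 1 + 2 ^ b * p ^ 2) :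
    2 ^ (k + 1) * (p + 1) = (2 ^ b + 1) * p ^ 2 + p + 2 := by
  have hmul := sigma_one_two_pow_mul_add_sigma_one (hodd.pow (n := 2)) k
  rw [h, sigma_one_prime_sq hp] at hmul
  zify at hmul ⊢
  linear_combination -hmul

lemma two_pow_mul_two_mul_add_one_eq {k p b : ℕ} (hp : 3 ≤ p) (hodd : Odd p) (hbk : b ≤ k)
    (h : 2 ^ (k + 1) * (p + 1) = (2 ^ b + 1) * p ^ 2 + p + 2) :
    2 ^ b * (2 * p + 1) = p ^ 2 + p + 2 := by
  obtain ⟨m, rfl⟩ := hodd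
  zify at h hp ⊢
  set q : ℤ := 2 ^ (k + 1) + 2 ^ b - (2 ^ b + 1) * (2 * m + 1) with hq_def
  have hq : (2 * m + 1 + 1) * q = 2 ^ b + 2 := by rw [hq_def]; linear_combination h
  have hq_pos : 0 < q := by nlinarith [pow_pos (two_pos : (0 : ℤ) < 2) b]
  have hdvd : (2 : ℤ) ^ (b + 1) ∣ 2 * m + 1 + q := by
    refine ⟨2 ^ (k - b) - m, ?_⟩
    rw [hq_def, show k + 1 = (b + 1) + (k - b) by omega]
    ring
  have hsum : 2 * m + 1 + q = 2 ^ (b + 1) := by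
    refine le_antisymm ?_ (Int.le_of_dvd (by omega) hdvd)
    rw [pow_succ]
    nlinarith
  have hq' : q = 2 ^ (b + 1) - (2 * m + 1) := by omega
  linear_combination hq - (2 * (m : ℤ) + 1 + 1) * hq'

lemma eq_three_and_eq_one_of_two_pow_mul_two_mul_add_one_eq {p b : ℕ} (hp : 0 < p)
    (h : 2 ^ b * (2 * p + 1) = p ^ 2 + p + 2) : p = 3 ∧ b = 1 := by
  have hdvd : 2 * p + 1 ∣ (2 * p + 1) ^ 2 + 7 := ⟨4 * 2 ^ b, by nlinarith [h]⟩
  have h7 : 2 * p + 1 ∣ 7 := (Nat.dvd_add_right (dvd_pow_self _ two_ne_zero)).mp hdvd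
  obtain rfl : p = 3 := by
    rcases (Nat.dvd_prime (by norm_num)).mp h7 with h1 | h1 <;> omega
  exact ⟨rfl, Nat.pow_right_injective le_rfl (show 2 ^ b = 2 ^ 1 by omega)⟩

theorem case_3_implies_n_eq_36_general
    (n k p b d₁ d₂ : ℕ) (hp : p.Prime) (hpodd : Odd p)
    (hn : n = 2 ^ k * p ^ 2)
    (hσ : σ 1 n = 2 * n + d₁ + d₂)
    (hbk : b ≤ k) (hd₁eq : d₁ = 1) (hd₂eq : d₂ = 2 ^ b * p ^ 2) :
    n = 36 ∧ d₁ = 1 ∧ d₂ = 18 := by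
  subst hn hd₁eq hd₂eq
  have hkey := two_pow_succ_mul_succ_eq_of_sigma_one_eq hp hpodd hσ
  have hp3 : 3 ≤ p := by
    obtain ⟨m, rfl⟩ := hpodd
    have := hp.two_le
    omega
  obtain ⟨rfl, rfl⟩ := eq_three_and_eq_one_of_two_pow_mul_two_mul_add_one_eq hp.pos
    (two_pow_mul_two_mul_add_one_eq hp3 hpodd hbk hkey)
  obtain rfl : k = 2 :=
    Nat.succ_injective (Nat.pow_right_injective le_rfl (show 2 ^ (k + 1) = 2 ^ 3 by omega))
  norm_num

theorem case_3_implies_n_eq_36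
    (n k p b d₁ d₂ : ℕ) (hk : 0 < k) (hp : p.Prime) (hpodd : Odd p)
    (hn : n = 2 ^ k * p ^ 2)
    (hd₁ : d₁ ∣ n) (hd₂ : d₂ ∣ n) (hd₁pos : 0 < d₁) (hd₂pos : 0 < d₂)
    (hne : d₁ ≠ d₂) (hσ : σ 1 n = 2 * n + d₁ + d₂)
    (hb : 1 ≤ b) (hbk : b ≤ k) (hd₁eq : d₁ = 1) (hd₂eq : d₂ = 2 ^ b * p ^ 2) :
    n = 36 ∧ d₁ = 1 ∧ d₂ = 18 :=
  case_3_implies_n_eq_36_general n k p b d₁ d₂ hp hpodd hn hσ hbk hd₁eq hd₂eq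
end

section
/- Let k, a, b be integers with 0 < a < b ≤ k, and let p be a prime satisfying p · (1 + 2^a + 2^b) = 2^(k+1) − 1. Then n = 2^k · p is 2-near perfect with omitted divisors 2^a · p and 2^b · p, i.e. σ(n) = 2n + 2^a · p + 2^b · p. -/
/-!
For an odd prime `p`, `σ(2^k p) = (2^(k+1) - 1)(p + 1) = 2 · 2^k p + (2^(k+1) - 1) - p`, and the
hypothesis turns the excess `(2^(k+1) - 1) - p` into `2^a p + 2^b p`.
-/

open ArithmeticFunction
open scoped ArithmeticFunction.sigma

theorem sigma_one_two_pow (k : ℕ) : σ 1 (2 ^ k) = 2 ^ (k + 1) - 1 := by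
  rw [sigma_one_apply_prime_pow Nat.prime_two, Nat.geomSum_eq le_rfl]
  simp

theorem sigma_one_two_pow_mul_of_odd_prime {k p : ℕ} (hp : p.Prime) (hodd : Odd p) :
    σ 1 (2 ^ k * p) = (2 ^ (k + 1) - 1) * (p + 1) := by
  have hcop : Nat.Coprime (2 ^ k) p := (Nat.coprime_two_left.mpr hodd).pow_left k
  rw [isMultiplicative_sigma.map_mul_of_coprime hcop, sigma_one_two_pow,
    sigma_one_apply, hp.sum_divisors]

theorem sigma_one_two_pow_mul_of_odd_prime_add_self (k : ℕ) {p : ℕ} (hp : p.Prime)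
    (hodd : Odd p) :
    σ 1 (2 ^ k * p) + p = 2 * (2 ^ k * p) + (2 ^ (k + 1) - 1) := by
  have hpow : 1 ≤ 2 ^ (k + 1) := Nat.one_le_two_pow
  rw [sigma_one_two_pow_mul_of_odd_prime hp hodd]
  zify [hpow]
  ring

theorem family_four_is_two_near_perfect_general
    (k a b p n : ℕ)
    (hpeq : p * (1 + 2 ^ a + 2 ^ b) = 2 ^ (k + 1) - 1) (hp : p.Prime)
    (hn : n = 2 ^ k * p) :
    σ 1 n = 2 * n + 2 ^ a * p + 2 ^ b * p := by
  have hodd : Odd p :=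
    Nat.Odd.of_mul_left (by rw [hpeq]; exact mersenne_odd.mpr k.succ_ne_zero)
  have key := sigma_one_two_pow_mul_of_odd_prime_add_self k hp hodd
  rw [← hpeq, ← hn] at key
  linarith

theorem family_four_is_two_near_perfect
    (k a b p n : ℕ) (ha : 0 < a) (hab : a < b) (hbk : b ≤ k)
    (hpeq : p * (1 + 2 ^ a + 2 ^ b) = 2 ^ (k + 1) - 1) (hp : p.Prime)
    (hn : n = 2 ^ k * p) :
    σ 1 n = 2 * n + 2 ^ a * p + 2 ^ b * p :=
  family_four_is_two_near_perfect_general k a b p n hpeq hp hn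
end
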